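/- arXiv:2312.15902 — 2 statements merged into one kernel-verified Lean document; each statement's English description precedes it below -/
import Mathlib

section
/- For every finite simple graph G on n vertices, the fractional matching number equals the minimum over vertex subsets S of (n − i(G − S) + |S|)/2, where i(G − S) is the number of isolated vertices of G − S (fractional Berge–Tutte formula). -/
open SimpleGraph

/-- `f` is a fractional matching of `G`: edge weights lie in `[0,1]`, non-edges get
weight `0`, and the weights of edges incident to any vertex sum to at most `1`. -/
def IsFracMatching {V : Type*} [Fintype V] [DecidableEq V]
    (G : SimpleGraph V) (f : Sym2 V → ℝ) : Prop :=
  (∀ e, 0 ≤ f e ∧ f e ≤ 1) ∧ (∀ e, e ∉ G.edgeSet → f e = 0) ∧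
    ∀ v : V, (∑ e : Sym2 V, if v ∈ e then f e else 0) ≤ 1

/-- The fractional matching number: the supremum of total weights of fractional
matchings. -/
noncomputable def fracMatchNum {V : Type*} [Fintype V] [DecidableEq V]
    (G : SimpleGraph V) : ℝ :=
  sSup {x : ℝ | ∃ f : Sym2 V → ℝ, IsFracMatching G f ∧ (∑ e : Sym2 V, f e) = x}

/-- The number of isolated vertices of a graph. -/
noncomputable def isolatedCount {W : Type*} (H : SimpleGraph W) : ℕ :=
  Nat.card {v : W | ∀ w : W, ¬ H.Adj v w}

section Aux

open Finset

variable {V : Type*} [Fintype V] [DecidableEq V]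

lemma sum_sym2_mem (v : V) (f : Sym2 V → ℝ) :
    (∑ e : Sym2 V, if v ∈ e then f e else 0) = ∑ u : V, f s(v,u) := by
  classical
  rw [← Finset.sum_filter]
  refine (Finset.sum_bij (fun u _ => s(v,u)) ?_ ?_ ?_ ?_).symm
  · intro u _; simp [Sym2.mem_iff]
  · intro a _ b _ h; exact Sym2.congr_right.mp h
  · intro e he
    simp only [mem_filter, mem_univ, true_and] at he
    obtain ⟨u, rfl⟩ := Sym2.mem_iff_exists.mp he
    exact ⟨u, mem_univ u, rfl⟩
  · intro u _; rfl

lemma sym2_sum_eq (f : Sym2 V → ℝ) (hd : ∀ v, f s(v,v) = 0) :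
    ∑ v : V, ∑ u : V, f s(v,u) = 2 * ∑ e : Sym2 V, f e := by
  classical
  have h1 : ∀ v : V, (∑ u : V, f s(v,u)) = ∑ e : Sym2 V, if v ∈ e then f e else 0 :=
    fun v => (sum_sym2_mem v f).symm
  simp_rw [h1]
  rw [Finset.sum_comm, Finset.mul_sum]
  refine Finset.sum_congr rfl ?_
  intro e _
  induction e using Sym2.ind with
  | _ a b =>
    rcases eq_or_ne a b with rfl | hab
    · simp [hd a]
    · have : (Finset.univ.filter (· ∈ (s(a,b) : Sym2 V))) = {a, b} := by
        ext x; simp [Sym2.mem_iff]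
      rw [← Finset.sum_filter, this, Finset.sum_pair hab]
      ring

lemma isoCount_eq (G : SimpleGraph V) (S : Finset V)
    [DecidablePred (fun v => v ∉ S ∧ ∀ w, G.Adj v w → w ∈ S)] :
    isolatedCount (G.induce ((↑S : Set V)ᶜ)) =
      (univ.filter (fun v => v ∉ S ∧ ∀ w, G.Adj v w → w ∈ S)).card := by
  classical
  have e : {v : ↥((↑S : Set V)ᶜ) | ∀ w, ¬ (G.induce ((↑S : Set V)ᶜ)).Adj v w} ≃
      {v : V // v ∉ S ∧ ∀ w, G.Adj v w → w ∈ S} := by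
    refine ⟨fun x => ⟨x.1.1, x.1.2, fun w hw => ?_⟩,
      fun y => ⟨⟨y.1, y.2.1⟩, fun w hw => ?_⟩, fun x => rfl, fun y => rfl⟩
    · by_contra hws
      exact x.2 ⟨w, hws⟩ hw
    · exact w.2 (y.2.2 w.1 hw)
  rw [isolatedCount, Nat.card_congr e, Nat.card_eq_fintype_card, Fintype.card_subtype]

lemma sum_ite_mem_sym2 (a b : V) (hab : a ≠ b) (c : V → ℝ) :
    (∑ v : V, if v ∈ (s(a,b) : Sym2 V) then c v else 0) = c a + c b := by
  classical
  rw [← Finset.sum_filter]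
  have : (Finset.univ.filter (· ∈ (s(a,b) : Sym2 V))) = {a, b} := by
    ext x; simp [Sym2.mem_iff]
  rw [this, Finset.sum_pair hab]

lemma frac_le (G : SimpleGraph V) (f : Sym2 V → ℝ)
    (h0 : ∀ e, 0 ≤ f e) (hsupp : ∀ e, e ∉ G.edgeSet → f e = 0)
    (hdeg : ∀ v : V, (∑ e : Sym2 V, if v ∈ e then f e else 0) ≤ 1)
    (S : Finset V) (I : Finset V)
    [DecidablePred (fun v => v ∉ S ∧ ∀ u, G.Adj v u → u ∈ S)]
    (hI : I = univ.filter (fun v => v ∉ S ∧ ∀ u, G.Adj v u → u ∈ S)) :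
    (∑ e : Sym2 V, f e) ≤
      ((Fintype.card V : ℝ) - (I.card : ℝ) + S.card) / 2 := by
  classical
  set w : V → ℝ := fun v => if v ∈ S then 1 else if v ∈ I then 0 else 1/2 with hw
  have hw0 : ∀ v, 0 ≤ w v := by
    intro v; simp only [hw]; split_ifs <;> norm_num
  have key : ∀ a b : V, G.Adj a b → 1 ≤ w a + w b := by
    intro a b hab
    by_cases haS : a ∈ S
    · have : w a = 1 := by simp [hw, haS]
      rw [this]; linarith [hw0 b]
    by_cases hbS : b ∈ S
    · have : w b = 1 := by simp [hw, hbS]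
      rw [this]; linarith [hw0 a]
    have haI : a ∉ I := by
      rw [hI]; simp only [mem_filter, not_and, mem_univ, true_implies]
      intro _ h; exact hbS (h b hab)
    have hbI : b ∉ I := by
      rw [hI]; simp only [mem_filter, not_and, mem_univ, true_implies]
      intro _ h; exact haS (h a hab.symm)
    have : w a = 1/2 := by simp [hw, haS, haI]
    have hb : w b = 1/2 := by simp [hw, hbS, hbI]
    rw [this, hb]; norm_num
  have step1 : (∑ e : Sym2 V, f e) ≤
      ∑ e : Sym2 V, (∑ v : V, if v ∈ e then w v else 0) * f e := by
    refine Finset.sum_le_sum ?_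
    intro e _
    by_cases hfe : f e = 0
    · rw [hfe, mul_zero]
    · have he : e ∈ G.edgeSet := by
        by_contra h; exact hfe (hsupp e h)
      induction e using Sym2.ind with
      | _ a b =>
        have hadj : G.Adj a b := he
        rw [sum_ite_mem_sym2 a b hadj.ne w]
        exact le_mul_of_one_le_left (h0 _) (key a b hadj)
  have step2 : (∑ e : Sym2 V, (∑ v : V, if v ∈ e then w v else 0) * f e)
      = ∑ v : V, w v * (∑ e : Sym2 V, if v ∈ e then f e else 0) := by
    simp_rw [Finset.sum_mul, Finset.mul_sum]
    rw [Finset.sum_comm]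
    congr 1; ext v; congr 1; ext e
    split_ifs <;> simp
  have step3 : (∑ v : V, w v * (∑ e : Sym2 V, if v ∈ e then f e else 0)) ≤ ∑ v : V, w v := by
    refine Finset.sum_le_sum ?_
    intro v _
    calc w v * (∑ e : Sym2 V, if v ∈ e then f e else 0) ≤ w v * 1 :=
          mul_le_mul_of_nonneg_left (hdeg v) (hw0 v)
      _ = w v := mul_one _
  have hdisj : ∀ v ∈ I, v ∉ S := by
    intro v hv; rw [hI] at hv; exact (mem_filter.mp hv).2.1
  have step4 : (∑ v : V, w v) = (Fintype.card V : ℝ)/2 + S.card/2 - I.card/2 := by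
    have : ∀ v : V, w v = 1/2 + (if v ∈ S then (1/2:ℝ) else 0) - (if v ∈ I then (1/2:ℝ) else 0) := by
      intro v
      by_cases hvS : v ∈ S
      · have hvI : v ∉ I := fun h => hdisj v h hvS
        simp [hw, hvS, hvI] <;> norm_num
      · by_cases hvI : v ∈ I <;> simp [hw, hvS, hvI] <;> norm_num
    simp_rw [this]
    rw [Finset.sum_sub_distrib, Finset.sum_add_distrib, Finset.sum_ite_mem,
      Finset.sum_ite_mem, Finset.univ_inter, Finset.univ_inter, Finset.sum_const,
      Finset.sum_const, Finset.sum_const, Finset.card_univ]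
    simp
    ring
  calc (∑ e : Sym2 V, f e) ≤ ∑ v : V, w v := by
        rw [← step2] at step3; exact step1.trans step3
    _ = (Fintype.card V : ℝ)/2 + S.card/2 - I.card/2 := step4
    _ = ((Fintype.card V : ℝ) - (I.card : ℝ) + S.card) / 2 := by ring

lemma exists_good_matching (G : SimpleGraph V) [DecidableRel G.Adj] (d : ℕ)
    (hd : ∀ A : Finset V, A.card ≤ (univ.filter (fun v => ∃ a ∈ A, G.Adj a v)).card + d) :
    ∃ f : Sym2 V → ℝ, IsFracMatching G f ∧
      (Fintype.card V : ℝ) - d ≤ 2 * ∑ e : Sym2 V, f e := by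
  classical
  set t : V → Finset (V ⊕ Fin d) :=
    fun v => (univ.filter (G.Adj v)).image Sum.inl ∪ univ.image Sum.inr with ht
  have hall : ∀ s : Finset V, s.card ≤ (s.biUnion t).card := by
    intro s
    rcases s.eq_empty_or_nonempty with rfl | hne
    · simp
    have hsub : ((univ.filter (fun v => ∃ a ∈ s, G.Adj a v)).image Sum.inl
        ∪ (univ : Finset (Fin d)).image Sum.inr) ⊆ s.biUnion t := by
      intro x hx
      rcases Finset.mem_union.mp hx with hx | hx
      · obtain ⟨u, hu, rfl⟩ := Finset.mem_image.mp hx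
        obtain ⟨a, ha, hadj⟩ := (Finset.mem_filter.mp hu).2
        exact Finset.mem_biUnion.mpr ⟨a, ha, Finset.mem_union_left _
          (Finset.mem_image.mpr ⟨u, Finset.mem_filter.mpr ⟨mem_univ u, hadj⟩, rfl⟩)⟩
      · obtain ⟨a, ha⟩ := hne
        exact Finset.mem_biUnion.mpr ⟨a, ha, Finset.mem_union_right _ hx⟩
    have hcard : ((univ.filter (fun v => ∃ a ∈ s, G.Adj a v)).image Sum.inl
        ∪ (univ : Finset (Fin d)).image Sum.inr).card
        = (univ.filter (fun v => ∃ a ∈ s, G.Adj a v)).card + d := by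
      rw [Finset.card_union_of_disjoint, Finset.card_image_of_injective _ Sum.inl_injective,
        Finset.card_image_of_injective _ Sum.inr_injective, Finset.card_univ, Fintype.card_fin]
      simp [Finset.disjoint_left]
    calc s.card ≤ (univ.filter (fun v => ∃ a ∈ s, G.Adj a v)).card + d := hd s
      _ = _ := hcard.symm
      _ ≤ (s.biUnion t).card := Finset.card_le_card hsub
  obtain ⟨g, hginj, hgt⟩ := (Finset.all_card_le_biUnion_card_iff_exists_injective t).mp hall
  have hadj : ∀ v u : V, g v = Sum.inl u → G.Adj v u := by
    intro v u h
    have := hgt v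
    rw [h, ht] at this
    rcases Finset.mem_union.mp this with h' | h'
    · obtain ⟨x, hx, hx'⟩ := Finset.mem_image.mp h'
      cases Sum.inl_injective hx'
      exact (Finset.mem_filter.mp hx).2
    · obtain ⟨x, _, hx'⟩ := Finset.mem_image.mp h'
      exact absurd hx' (by simp)
  set f : Sym2 V → ℝ := Sym2.lift ⟨fun u v =>
      ((if g u = Sum.inl v then (1:ℝ) else 0) + (if g v = Sum.inl u then 1 else 0)) / 2,
      by intro u v; dsimp only; rw [add_comm]⟩ with hf
  have hfs : ∀ u v : V, f s(u,v) =
      ((if g u = Sum.inl v then (1:ℝ) else 0) + (if g v = Sum.inl u then 1 else 0)) / 2 := by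
    intro u v; rw [hf]; rfl
  have hdiag : ∀ v : V, f s(v,v) = 0 := by
    intro v
    rw [hfs]
    have : ¬ (g v = Sum.inl v) := fun h => G.irrefl (hadj v v h)
    simp [this]
  refine ⟨f, ⟨?_, ?_, ?_⟩, ?_⟩
  · intro e
    induction e using Sym2.ind with
    | _ a b => rw [hfs]; constructor <;> split_ifs <;> norm_num
  · intro e he
    induction e using Sym2.ind with
    | _ a b =>
      rw [SimpleGraph.mem_edgeSet] at he
      rw [hfs]
      have h1 : ¬ (g a = Sum.inl b) := fun h => he (hadj a b h)
      have h2 : ¬ (g b = Sum.inl a) := fun h => he ((hadj b a h).symm)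
      simp [h1, h2]
  · intro v
    rw [sum_sym2_mem v f]
    have : ∀ u : V, f s(v,u) =
        ((if g v = Sum.inl u then (1:ℝ) else 0) + (if g u = Sum.inl v then 1 else 0)) / 2 :=
      fun u => hfs v u
    simp_rw [this]
    have h1 : (∑ u : V, (if g v = Sum.inl u then (1:ℝ) else 0)) ≤ 1 := by
      rw [← Finset.sum_filter]
      have : (univ.filter (fun u => g v = Sum.inl u)).card ≤ 1 := by
        apply Finset.card_le_one.mpr
        intro a ha b hb
        simp only [mem_filter] at ha hb
        exact Sum.inl_injective (ha.2 ▸ hb.2)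
      calc (∑ _u ∈ univ.filter (fun u => g v = Sum.inl u), (1:ℝ))
          = (univ.filter (fun u => g v = Sum.inl u)).card := by simp
        _ ≤ 1 := by exact_mod_cast this
    have h2 : (∑ u : V, (if g u = Sum.inl v then (1:ℝ) else 0)) ≤ 1 := by
      rw [← Finset.sum_filter]
      have : (univ.filter (fun u => g u = Sum.inl v)).card ≤ 1 := by
        apply Finset.card_le_one.mpr
        intro a ha b hb
        simp only [mem_filter] at ha hb
        exact hginj (ha.2.trans hb.2.symm)
      calc (∑ _u ∈ univ.filter (fun u => g u = Sum.inl v), (1:ℝ))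
          = (univ.filter (fun u => g u = Sum.inl v)).card := by simp
        _ ≤ 1 := by exact_mod_cast this
    rw [← Finset.sum_div, Finset.sum_add_distrib]
    linarith
  · -- total weight
    have htot : ∑ v : V, ∑ u : V, f s(v,u) = 2 * ∑ e : Sym2 V, f e := sym2_sum_eq f hdiag
    have hrow : ∀ v : V, (∑ u : V, (if g v = Sum.inl u then (1:ℝ) else 0))
        = if (g v).isLeft then 1 else 0 := by
      intro v
      cases hgv : g v with
      | inl u =>
        rw [Finset.sum_eq_single u]
        · simp
        · intro b _ hb; simp [Sum.inl.injEq, hb.symm]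
        · intro h; exact absurd (mem_univ u) h
      | inr y => simp
    have hsum : ∑ v : V, ∑ u : V, f s(v,u)
        = ∑ v : V, (if (g v).isLeft then (1:ℝ) else 0) := by
      have expand : ∀ v : V, (∑ u : V, f s(v,u))
          = ((∑ u : V, (if g v = Sum.inl u then (1:ℝ) else 0))
            + ∑ u : V, (if g u = Sum.inl v then (1:ℝ) else 0)) / 2 := by
        intro v
        simp_rw [hfs]
        rw [← Finset.sum_div, ← Finset.sum_add_distrib]
      simp_rw [expand]
      have e1 : (∑ x : V, ∑ u : V, (if g x = Sum.inl u then (1:ℝ) else 0))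
          = ∑ v : V, (if (g v).isLeft then (1:ℝ) else 0) :=
        Finset.sum_congr rfl (fun v _ => hrow v)
      have e2 : (∑ x : V, ∑ u : V, (if g u = Sum.inl x then (1:ℝ) else 0))
          = ∑ v : V, (if (g v).isLeft then (1:ℝ) else 0) := by
        rw [Finset.sum_comm]
        exact Finset.sum_congr rfl (fun v _ => hrow v)
      calc (∑ x : V, ((∑ u : V, (if g x = Sum.inl u then (1:ℝ) else 0))
              + ∑ u : V, (if g u = Sum.inl x then (1:ℝ) else 0)) / 2)
          = ((∑ x : V, ∑ u : V, (if g x = Sum.inl u then (1:ℝ) else 0))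
              + ∑ x : V, ∑ u : V, (if g u = Sum.inl x then (1:ℝ) else 0)) / 2 := by
            rw [← Finset.sum_div, Finset.sum_add_distrib]
        _ = ∑ v : V, (if (g v).isLeft then (1:ℝ) else 0) := by rw [e1, e2]; ring
    set A := (univ.filter (fun v => (g v).isLeft)).card with hA
    have hAsum : (∑ v : V, (if (g v).isLeft then (1:ℝ) else 0)) = A := by
      rw [← Finset.sum_filter]
      simp [hA]
    have hR : (univ.filter (fun v => ¬ (g v).isLeft)).card ≤ d := by
      have hsub : (univ.filter (fun v => ¬ (g v).isLeft)).image g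
          ⊆ (univ : Finset (Fin d)).image Sum.inr := by
        intro x hx
        obtain ⟨v, hv, rfl⟩ := Finset.mem_image.mp hx
        have hnl := (Finset.mem_filter.mp hv).2
        cases hgv : g v with
        | inl u => rw [hgv] at hnl; simp at hnl
        | inr y => exact Finset.mem_image.mpr ⟨y, mem_univ y, rfl⟩
      calc (univ.filter (fun v => ¬ (g v).isLeft)).card
          = ((univ.filter (fun v => ¬ (g v).isLeft)).image g).card :=
            (Finset.card_image_of_injective _ hginj).symm
        _ ≤ ((univ : Finset (Fin d)).image Sum.inr).card := Finset.card_le_card hsub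
        _ ≤ d := by
            rw [Finset.card_image_of_injective _ Sum.inr_injective]
            simp
    have hsplit : (univ.filter (fun v => (g v).isLeft)).card
        + (univ.filter (fun v => ¬ (g v).isLeft)).card = Fintype.card V := by
      rw [Finset.card_filter_add_card_filter_not, Finset.card_univ]
    have hge : Fintype.card V ≤ A + d := by omega
    rw [← htot, hsum, hAsum]
    have : (Fintype.card V : ℝ) ≤ (A : ℝ) + d := by exact_mod_cast hge
    linarith

end Aux

/-- Fractional Berge–Tutte formula (Scheinerman–Ullman):
`α*'(G) = min_S (n - i(G - S) + |S|) / 2`. -/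
theorem fractional_berge_tutte {V : Type*} [Fintype V] [DecidableEq V]
    (G : SimpleGraph V) (n : ℕ) (hn : n = Fintype.card V) :
    fracMatchNum G =
      (Finset.univ : Finset (Finset V)).inf' Finset.univ_nonempty
        (fun S : Finset V =>
          ((n : ℝ) - (isolatedCount (G.induce ((↑S : Set V)ᶜ)) : ℝ) + (S.card : ℝ)) / 2) := by
  classical
  subst hn
  haveI : DecidableRel G.Adj := Classical.decRel _
  set N := Fintype.card V with hN
  set bound : Finset V → ℝ := fun S : Finset V =>
      ((N : ℝ) - (isolatedCount (G.induce ((↑S : Set V)ᶜ)) : ℝ) + (S.card : ℝ)) / 2 with hbound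
  set M : Set ℝ := {x : ℝ | ∃ f : Sym2 V → ℝ, IsFracMatching G f ∧ (∑ e : Sym2 V, f e) = x}
    with hM
  have hub : ∀ x ∈ M, x ≤ (Finset.univ : Finset (Finset V)).inf' Finset.univ_nonempty bound := by
    rintro x ⟨f, ⟨hb, hs, hdeg⟩, rfl⟩
    refine Finset.le_inf' _ _ ?_
    intro S _
    have h := frac_le G f (fun e => (hb e).1) hs hdeg S
      (Finset.univ.filter (fun v => v ∉ S ∧ ∀ u, G.Adj v u → u ∈ S)) rfl
    have hiso := isoCount_eq G S
    show (∑ e : Sym2 V, f e) ≤ ((N : ℝ) - (isolatedCount (G.induce ((↑S : Set V)ᶜ)) : ℝ)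
      + (S.card : ℝ)) / 2
    rw [hiso]
    exact h
  have hne : M.Nonempty := by
    refine ⟨0, (fun _ => 0), ⟨fun e => by norm_num, fun e _ => rfl, fun v => by simp⟩, by simp⟩
  apply le_antisymm
  · exact csSup_le hne hub
  · -- lower bound
    set gZ : Finset V → ℤ := fun S =>
        ((Finset.univ.filter (fun v => v ∉ S ∧ ∀ u, G.Adj v u → u ∈ S)).card : ℤ)
          - S.card with hgZ
    obtain ⟨S₀, -, hS₀⟩ := Finset.exists_mem_eq_sup' (Finset.univ_nonempty (α := Finset V)) gZ
    set D : ℤ := Finset.univ.sup' Finset.univ_nonempty gZ with hD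
    have hD0 : (0 : ℤ) ≤ D := by
      refine le_trans ?_ (Finset.le_sup' gZ (Finset.mem_univ (∅ : Finset V)))
      simp [hgZ]
    set d : ℕ := D.toNat with hdd
    have hdD : (d : ℤ) = D := Int.toNat_of_nonneg hD0
    have hHall : ∀ A : Finset V,
        A.card ≤ (Finset.univ.filter (fun v => ∃ a ∈ A, G.Adj a v)).card + d := by
      intro A
      set I := A.filter (fun v => ∀ a ∈ A, ¬ G.Adj v a) with hI
      set K := A.filter (fun v => ¬ ∀ a ∈ A, ¬ G.Adj v a) with hK
      have e0 : I.card + K.card = A.card := by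
        rw [hI, hK]
        exact Finset.card_filter_add_card_filter_not _
      set S := Finset.univ.filter (fun v => ∃ a ∈ I, G.Adj a v) with hS
      have hIiso : I ⊆ Finset.univ.filter (fun v => v ∉ S ∧ ∀ u, G.Adj v u → u ∈ S) := by
        intro v hv
        have hvA := (Finset.mem_filter.mp hv).1
        have hvprop := (Finset.mem_filter.mp hv).2
        refine Finset.mem_filter.mpr ⟨Finset.mem_univ v, ?_, ?_⟩
        · intro hvS
          obtain ⟨a, haI, hadj⟩ := (Finset.mem_filter.mp hvS).2
          exact hvprop a (Finset.mem_filter.mp haI).1 hadj.symm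
        · intro u hadj
          exact Finset.mem_filter.mpr ⟨Finset.mem_univ u, v, hv, hadj⟩
      have h1 : I.card ≤ (Finset.univ.filter
          (fun v => v ∉ S ∧ ∀ u, G.Adj v u → u ∈ S)).card :=
        Finset.card_le_card hIiso
      have hdisjSK : Disjoint S K := by
        rw [Finset.disjoint_left]
        intro x hxS hxK
        obtain ⟨b, hbI, hbadj⟩ := (Finset.mem_filter.mp hxS).2
        have hbprop := (Finset.mem_filter.mp hbI).2
        have hxA := (Finset.mem_filter.mp hxK).1
        exact hbprop x hxA hbadj
      have hSK : S ∪ K ⊆ Finset.univ.filter (fun v => ∃ a ∈ A, G.Adj a v) := by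
        intro x hx
        rcases Finset.mem_union.mp hx with hx | hx
        · obtain ⟨b, hbI, hbadj⟩ := (Finset.mem_filter.mp hx).2
          exact Finset.mem_filter.mpr
            ⟨Finset.mem_univ x, b, (Finset.mem_filter.mp hbI).1, hbadj⟩
        · have hxA := (Finset.mem_filter.mp hx).1
          have hxn := (Finset.mem_filter.mp hx).2
          push_neg at hxn
          obtain ⟨a, haA, hadj⟩ := hxn
          exact Finset.mem_filter.mpr ⟨Finset.mem_univ x, a, haA, hadj.symm⟩
      have h2 : S.card + K.card ≤ (Finset.univ.filter (fun v => ∃ a ∈ A, G.Adj a v)).card := by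
        rw [← Finset.card_union_of_disjoint hdisjSK]
        exact Finset.card_le_card hSK
      have h3 : gZ S ≤ D := Finset.le_sup' gZ (Finset.mem_univ S)
      rw [hgZ] at h3
      simp only at h3
      omega
    obtain ⟨f, hfM, htot⟩ := exists_good_matching G d hHall
    have hmem : (∑ e : Sym2 V, f e) ∈ M := ⟨f, hfM, rfl⟩
    have hbdd : BddAbove M :=
      ⟨(Finset.univ : Finset (Finset V)).inf' Finset.univ_nonempty bound, fun x hx => hub x hx⟩
    refine le_trans ?_ (le_csSup hbdd hmem)
    refine le_trans (Finset.inf'_le bound (Finset.mem_univ S₀)) ?_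
    have h4 : ((Finset.univ.filter
        (fun v => v ∉ S₀ ∧ ∀ u, G.Adj v u → u ∈ S₀)).card : ℤ) - S₀.card = (d : ℤ) := by
      rw [hdD, hS₀]
    have hiso := isoCount_eq G S₀
    show ((N : ℝ) - (isolatedCount (G.induce ((↑S₀ : Set V)ᶜ)) : ℝ) + (S₀.card : ℝ)) / 2
      ≤ ∑ e : Sym2 V, f e
    rw [hiso]
    have h5 : ((Finset.univ.filter
        (fun v => v ∉ S₀ ∧ ∀ u, G.Adj v u → u ∈ S₀)).card : ℝ) - S₀.card = (d : ℝ) := by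
      exact_mod_cast h4
    rw [← hN] at htot
    linarith
end

section
/- If G is a connected finite simple graph with a unique perfect matching, then G contains a cut edge that belongs to the perfect matching (Kotzig's theorem). -/
/-!
Encode a perfect matching as an involution `μ` with `v` adjacent to `μ v`. If no edge `v, μ v`
in the component of `w` is a bridge, every vertex there has a neighbour `g v` other than its
partner, and the alternating walk `w, g w, μ (g w), g (μ (g w)), …` eventually closes up. Its first
closed stretch is either an even alternating cycle, along which `μ` can be switched to a second
perfect matching, or an odd cycle whose vertices other than a base `x` are matched among
themselves: a blossom. An odd cycle minus any vertex has a perfect matching, so contracting the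
blossom onto `x` keeps `μ` the unique perfect matching; uniqueness also forbids edges from the
blossom to `μ x` other than the one at `x`. The contraction has a smaller component at `x`, so by
induction it has a bridge `v, μ v` there, and that bridge lifts back to `G`.
-/

open Function Set

namespace ZMod

variable {n : ℕ} [NeZero n] {k : ZMod n}

lemma val_add_one (k : ZMod n) : (k + 1).val = (k.val + 1) % n := by
  rw [val_add, val_one_eq_one_mod, Nat.add_mod_mod]

lemma val_add_one_of_odd (hn : Odd n) (hk : Odd k.val) : (k + 1).val = k.val + 1 := by
  have := val_lt k
  rw [Nat.odd_iff] at hn hk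
  rw [val_add_one, Nat.mod_eq_of_lt (by omega)]

lemma val_sub_one_of_ne_zero (hk : k ≠ 0) : (k - 1).val = k.val - 1 := by
  have h1 : (1 : ZMod n).val ≤ k.val := by
    rw [val_one_eq_one_mod]
    exact (Nat.mod_le _ _).trans (Nat.one_le_iff_ne_zero.2 ((val_ne_zero k).2 hk))
  rw [val_sub h1, val_one_eq_one_mod]
  rcases Nat.lt_or_ge 1 n with hn | hn
  · rw [Nat.mod_eq_of_lt hn]
  · have := val_lt k; omega

lemma odd_val_sub_one (hk : k ≠ 0) (h : ¬ Odd k.val) : Odd (k - 1).val := by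
  have := (val_ne_zero k).2 hk
  rw [val_sub_one_of_ne_zero hk, Nat.odd_iff]
  rw [Nat.odd_iff] at h
  omega

lemma val_neg_one' : (-1 : ZMod n).val = n - 1 := by
  obtain ⟨m, rfl⟩ : ∃ m, n = m + 1 := ⟨n - 1, (Nat.succ_pred_eq_of_pos (NeZero.pos n)).symm⟩
  exact val_neg_one m

end ZMod

namespace SimpleGraph

variable {V : Type*} {G : SimpleGraph V} {μ σ τ g : V → V} {S T : Set V} {u v w x y : V}

section Mates

/-- A perfect matching of `G` on `S`, encoded as the involution sending each vertex to its
partner. -/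
def IsMateOn (G : SimpleGraph V) (S : Set V) (σ : V → V) : Prop :=
  ∀ v ∈ S, σ v ∈ S ∧ σ (σ v) = v ∧ G.Adj v (σ v)

lemma IsMateOn.apply_apply (h : IsMateOn G S σ) (hv : v ∈ S) : σ (σ v) = v := (h v hv).2.1

lemma IsMateOn.adj (h : IsMateOn G S σ) (hv : v ∈ S) : G.Adj v (σ v) := (h v hv).2.2

lemma IsMateOn.apply_eq_comm (hμ : IsMateOn G univ μ) : μ u = v ↔ μ v = u :=
  ⟨fun h => h ▸ hμ.apply_apply trivial, fun h => h ▸ hμ.apply_apply trivial⟩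

lemma IsMateOn.injective (hμ : IsMateOn G univ μ) : Injective μ :=
  fun a b h => by rw [← hμ.apply_apply (mem_univ a), h, hμ.apply_apply (mem_univ b)]

lemma IsMateOn.piecewise [DecidablePred (· ∈ S)] (hσ : IsMateOn G S σ) (hτ : IsMateOn G T τ)
    (hST : Disjoint S T) : IsMateOn G (S ∪ T) (S.piecewise σ τ) := by
  rintro v (hv | hv)
  · obtain ⟨h₁, h₂, h₃⟩ := hσ v hv
    simp [Set.piecewise, hv, h₁, h₂, h₃]
  · obtain ⟨h₁, h₂, h₃⟩ := hτ v hv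
    simp [Set.piecewise, hST.notMem_of_mem_right hv, hST.notMem_of_mem_right h₁, h₁, h₂, h₃]

lemma isMateOn_pair [DecidableEq V] (h : G.Adj u v) : IsMateOn G {u, v} (Equiv.swap u v) := by
  rintro a (rfl | rfl)
  · simp [h]
  · simp [h.symm]

/-- Switch `μ` along the cycle: each cycle vertex takes its other cycle neighbour. -/
lemma exists_isMateOn_ne_of_cycle {n : ℕ} [NeZero n] (hn : 3 ≤ n) {c : ZMod n → V}
    (hc : Injective c) (hadj : ∀ k, G.Adj (c k) (c (k + 1))) (hμ : IsMateOn G univ μ)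
    (hmate : ∀ k, μ (c k) = c (k + 1) ∨ μ (c k) = c (k - 1)) :
    ∃ σ, IsMateOn G univ σ ∧ σ ≠ μ := by
  classical
  have hne : ∀ k : ZMod n, c (k + 1) ≠ c (k - 1) := by
    intro k h
    have h2 : ((2 : ℕ) : ZMod n) = 0 := by push_cast; linear_combination hc h
    have := Nat.le_of_dvd two_pos ((ZMod.natCast_eq_zero_iff 2 n).1 h2)
    omega
  set σ := extend c (fun k => if μ (c k) = c (k + 1) then c (k - 1) else c (k + 1)) μ
  have hσc : ∀ k, σ (c k) = if μ (c k) = c (k + 1) then c (k - 1) else c (k + 1) :=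
    hc.extend_apply _ _
  have hσ : IsMateOn G univ σ := by
    refine fun v _ => ⟨trivial, ?_⟩
    by_cases hv : ∃ k, c k = v
    · obtain ⟨k, rfl⟩ := hv
      by_cases hk : μ (c k) = c (k + 1)
      · have : μ (c (k - 1)) ≠ c (k - 1 + 1) := fun h =>
          hne k (by rw [← hk, ← hμ.apply_eq_comm.1 h, sub_add_cancel])
        rw [hσc, if_pos hk, hσc, if_neg this, sub_add_cancel]
        simpa using (hadj (k - 1)).symm
      · have : μ (c (k + 1)) = c (k + 1 + 1) := (hmate (k + 1)).resolve_right fun h =>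
          hk (by rw [← hμ.apply_eq_comm.1 h, add_sub_cancel_right])
        rw [hσc, if_neg hk, hσc, if_pos this, add_sub_cancel_right]
        exact ⟨rfl, hadj k⟩
    · have hμv : ¬ ∃ k, c k = μ v := by
        rintro ⟨k, hk⟩
        rcases hmate k with h | h
        · exact hv ⟨k + 1, by rw [← h, hk, hμ.apply_apply trivial]⟩
        · exact hv ⟨k - 1, by rw [← h, hk, hμ.apply_apply trivial]⟩
      have hσv : σ v = μ v := extend_apply' _ _ _ hv
      have hσμv : σ (μ v) = μ (μ v) := extend_apply' _ _ _ hμv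
      rw [hσv, hσμv]
      exact ⟨hμ.apply_apply trivial, hμ.adj trivial⟩
  refine ⟨σ, hσ, fun h => ?_⟩
  have h0 := congrFun h (c 0)
  rw [hσc] at h0
  split_ifs at h0 with h1
  · exact hne 0 (h1.symm.trans h0.symm)
  · exact h1 h0.symm

lemma exists_isMateOn_range_sdiff_zero_of_odd {n : ℕ} [NeZero n] (hn : Odd n)
    {c : ZMod n → V} (hc : Injective c) (hadj : ∀ k, G.Adj (c k) (c (k + 1))) :
    ∃ τ, IsMateOn G (range c \ {c 0}) τ := by
  classical
  let p : ZMod n → ZMod n := fun k => if Odd k.val then k + 1 else k - 1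
  refine ⟨extend c (c ∘ p) id, ?_⟩
  have hτ : ∀ k, extend c (c ∘ p) id (c k) = c (p k) := hc.extend_apply _ _
  rintro _ ⟨⟨k, rfl⟩, hk0⟩
  have hk : k ≠ 0 := fun h => hk0 (by rw [h]; rfl)
  have hk' := (ZMod.val_ne_zero k).2 hk
  have hmem : ∀ l, l ≠ 0 → c l ∈ range c \ {c 0} := fun l hl => ⟨⟨l, rfl⟩, fun h => hl (hc h)⟩
  by_cases hodd : Odd k.val
  · have hval := ZMod.val_add_one_of_odd hn hodd
    have heven : ¬ Odd (k + 1).val := by rw [hval, Nat.odd_add_one, not_not]; exact hodd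
    have hp : p k = k + 1 := if_pos hodd
    have hpp : p (k + 1) = k := by simp only [p, if_neg heven, add_sub_cancel_right]
    rw [hτ, hτ, hp, hpp]
    exact ⟨hmem _ (by rw [← ZMod.val_ne_zero, hval]; omega), rfl, hadj k⟩
  · have hodd' := ZMod.odd_val_sub_one hk hodd
    have hp : p k = k - 1 := if_neg hodd
    have hpp : p (k - 1) = k := by simp only [p, if_pos hodd', sub_add_cancel]
    rw [hτ, hτ, hp, hpp]
    refine ⟨hmem _ fun h => ?_, rfl, by simpa using (hadj (k - 1)).symm⟩
    rw [h, ZMod.val_zero] at hodd'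
    exact Nat.not_odd_zero hodd'

end Mates

section Reachable

lemma Reachable.map_of_forall_adj {W : Type*} {H : SimpleGraph W} (f : V → W)
    (h : ∀ a b, G.Adj a b → H.Reachable (f a) (f b)) (huv : G.Reachable u v) :
    H.Reachable (f u) (f v) := by
  rw [reachable_iff_reflTransGen] at huv ⊢
  exact huv.lift' f fun a b hab => (reachable_iff_reflTransGen _ _).1 (h a b hab)

lemma Reachable.mem_of_forall_adj (h : ∀ a b, G.Adj a b → a ∈ S → b ∈ S)
    (huv : G.Reachable u v) (hu : u ∈ S) : v ∈ S := by
  rw [reachable_iff_reflTransGen] at huv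
  induction huv with
  | refl => exact hu
  | tail _ hab ih => exact h _ _ hab ih

lemma exists_adj_ne_of_not_isBridge (h : G.Adj u v) (hb : ¬ G.IsBridge s(u, v)) :
    ∃ w, G.Adj u w ∧ w ≠ v := by
  rw [isBridge_iff, not_not] at hb
  obtain ⟨p⟩ := hb
  obtain ⟨hadj, hne⟩ := (deleteEdges_adj ..).1 (p.adj_snd (p.not_nil_of_ne h.ne))
  exact ⟨_, hadj, fun h' => hne (by rw [h']; rfl)⟩

end Reachable

/-- Abstracts the odd cycles of Edmonds' blossom algorithm: all that the contraction argument
uses about them is factor-criticality. -/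
structure IsBlossom (G : SimpleGraph V) (μ : V → V) (B : Set V) (x : V) : Prop where
  base_mem : x ∈ B
  mapsTo_mate : MapsTo μ (B \ {x}) (B \ {x})
  exists_isMateOn : ∀ u ∈ B, ∃ τ, IsMateOn G (B \ {u}) τ
  reachable : ∀ v ∈ B, G.Reachable x v

lemma isBlossom_range_of_odd {n : ℕ} [NeZero n] (hn : Odd n) {c : ZMod n → V}
    (hc : Injective c) (hadj : ∀ k, G.Adj (c k) (c (k + 1))) (hμ : IsMateOn G univ μ)
    (hmate : ∀ k, Odd k.val → μ (c k) = c (k + 1)) : G.IsBlossom μ (range c) (c 0) := by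
  refine ⟨⟨0, rfl⟩, ?_, fun _ ⟨t, ht⟩ => ?_, ?_⟩
  · rintro _ ⟨⟨k, rfl⟩, hk0⟩
    have hk : k ≠ 0 := fun h => hk0 (by rw [h]; rfl)
    have hk' := (ZMod.val_ne_zero k).2 hk
    by_cases hodd : Odd k.val
    · rw [hmate k hodd]
      refine ⟨⟨_, rfl⟩, fun h => ?_⟩
      have h0 := congrArg ZMod.val (hc h)
      rw [ZMod.val_add_one_of_odd hn hodd, ZMod.val_zero] at h0
      omega
    · have hodd' := ZMod.odd_val_sub_one hk hodd
      rw [hμ.apply_eq_comm.2 (by simpa using hmate (k - 1) hodd')]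
      refine ⟨⟨_, rfl⟩, fun h => ?_⟩
      rw [hc h, ZMod.val_zero] at hodd'
      exact Nat.not_odd_zero hodd'
  · obtain ⟨τ, hτ⟩ := exists_isMateOn_range_sdiff_zero_of_odd hn (c := fun k => c (k + t))
      (hc.comp (add_left_injective t)) fun k => by simpa [add_right_comm] using hadj (k + t)
    refine ⟨τ, ?_⟩
    rw [← ht, ← (Equiv.addRight t).surjective.range_comp c]
    simpa [Function.comp_def] using hτ
  · suffices h : ∀ m : ℕ, G.Reachable (c 0) (c m) by
      rintro _ ⟨k, rfl⟩
      simpa using h k.val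
    intro m
    induction m with
    | zero => simp
    | succ m ih => simpa using ih.trans (hadj m).reachable

section Contraction

variable {B : Set V} {a b : V}

open Classical in
noncomputable def collapse (B : Set V) (x v : V) : V := if v ∈ B then x else v

/-- The contraction of the blossom `B` onto its base `x`, on the same vertex type: the other
vertices of `B` are kept, joined only to their partners, so that `μ` stays a perfect matching. -/
def contractBlossom (G : SimpleGraph V) (μ : V → V) (B : Set V) (x : V) : SimpleGraph V :=
  fromRel fun a b =>
    (∃ a₀ b₀, G.Adj a₀ b₀ ∧ collapse B x a₀ = a ∧ collapse B x b₀ = b) ∨ (a ∈ B \ {x} ∧ b = μ a)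

lemma collapse_of_mem (h : v ∈ B) : collapse B x v = x := if_pos h

lemma collapse_of_notMem (h : v ∉ B) : collapse B x v = v := if_neg h

lemma collapse_eq_self (hv : v ∉ B \ {x}) : collapse B x v = v := by
  by_cases h : v ∈ B
  · rw [collapse_of_mem h]; exact (not_not.1 fun h' => hv ⟨h, h'⟩).symm
  · exact collapse_of_notMem h

lemma collapse_notMem_sdiff : collapse B x v ∉ B \ {x} := by
  by_cases h : v ∈ B
  · rw [collapse_of_mem h]; exact fun h => h.2 rfl
  · rw [collapse_of_notMem h]; exact fun h' => h h'.1

lemma contractBlossom_adj_collapse (h : G.Adj a b) (hne : collapse B x a ≠ collapse B x b) :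
    (G.contractBlossom μ B x).Adj (collapse B x a) (collapse B x b) :=
  (fromRel_adj _ _ _).2 ⟨hne, Or.inl (Or.inl ⟨a, b, h, rfl, rfl⟩)⟩

lemma eq_mate_of_contractBlossom_adj (hμ : IsMateOn G univ μ) (ha : a ∈ B \ {x})
    (h : (G.contractBlossom μ B x).Adj a b) : b = μ a := by
  obtain ⟨-, (⟨a₀, -, -, h₀, -⟩ | ⟨-, rfl⟩) | (⟨-, a₀, -, -, h₀⟩ | ⟨-, rfl⟩)⟩ :=
    (fromRel_adj _ _ _).1 h
  · exact absurd (h₀ ▸ ha) collapse_notMem_sdiff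
  · rfl
  · exact absurd (h₀ ▸ ha) collapse_notMem_sdiff
  · exact (hμ.apply_apply trivial).symm

namespace IsBlossom

variable (hμ : IsMateOn G univ μ) (hB : G.IsBlossom μ B x)
include hB

lemma eq_of_collapse_eq (h : collapse B x v = a) (ha : a ∉ B) : v = a := by
  by_cases hv : v ∈ B
  · rw [collapse_of_mem hv] at h; exact absurd (h ▸ hB.base_mem) ha
  · rwa [collapse_of_notMem hv] at h

lemma mem_of_collapse_eq_base (h : collapse B x v = x) : v ∈ B := by
  by_contra hv
  rw [collapse_of_notMem hv] at h
  exact hv (h ▸ hB.base_mem)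

lemma reachable_collapse : G.Reachable (collapse B x v) v := by
  by_cases hv : v ∈ B
  · rw [collapse_of_mem hv]; exact hB.reachable v hv
  · rw [collapse_of_notMem hv]

lemma adj_of_contractBlossom_adj (ha : a ∉ B) (hb : b ∉ B)
    (h : (G.contractBlossom μ B x).Adj a b) : G.Adj a b := by
  obtain ⟨-, (⟨a₀, b₀, h₀, rfl, rfl⟩ | ⟨ha', -⟩) | (⟨b₀, a₀, h₀, rfl, rfl⟩ | ⟨hb', -⟩)⟩ :=
    (fromRel_adj _ _ _).1 h
  · rwa [← hB.eq_of_collapse_eq rfl ha, ← hB.eq_of_collapse_eq rfl hb]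
  · exact absurd ha'.1 ha
  · rw [← hB.eq_of_collapse_eq rfl ha, ← hB.eq_of_collapse_eq rfl hb]; exact h₀.symm
  · exact absurd hb'.1 hb

include hμ

lemma mate_notMem_sdiff (hv : v ∉ B \ {x}) : μ v ∉ B \ {x} :=
  fun h => hv (hμ.apply_apply (mem_univ v) ▸ hB.mapsTo_mate h)

lemma exists_adj_of_contractBlossom_adj_base (h : (G.contractBlossom μ B x).Adj x y) :
    y ∉ B ∧ ∃ u ∈ B, G.Adj u y := by
  have hy : y ∉ B \ {x} := fun hy => hB.mate_notMem_sdiff hμ (fun h => h.2 rfl)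
    (hμ.apply_eq_comm.2 (eq_mate_of_contractBlossom_adj hμ hy h.symm).symm ▸ hy)
  have hy' : y ∉ B := fun hy' => hy ⟨hy', h.ne.symm⟩
  refine ⟨hy', ?_⟩
  obtain ⟨-, (⟨a₀, b₀, h₀, ha₀, hb₀⟩ | ⟨hx, -⟩) | (⟨b₀, a₀, h₀, hb₀, ha₀⟩ | ⟨hy'', -⟩)⟩ :=
    (fromRel_adj _ _ _).1 h
  · exact ⟨a₀, hB.mem_of_collapse_eq_base ha₀, hB.eq_of_collapse_eq hb₀ hy' ▸ h₀⟩
  · exact absurd rfl hx.2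
  · exact ⟨a₀, hB.mem_of_collapse_eq_base ha₀, hB.eq_of_collapse_eq hb₀ hy' ▸ h₀.symm⟩
  · exact absurd hy'' hy

lemma isMateOn_contractBlossom : IsMateOn (G.contractBlossom μ B x) univ μ := by
  refine fun v _ => ⟨trivial, hμ.apply_apply trivial, ?_⟩
  have hne := (hμ.adj (mem_univ v)).ne
  by_cases hv : v ∈ B \ {x}
  · exact (fromRel_adj _ _ _).2 ⟨hne, Or.inl (Or.inr ⟨hv, rfl⟩)⟩
  · have h := contractBlossom_adj_collapse (B := B) (x := x) (μ := μ) (hμ.adj (mem_univ v))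
    rw [collapse_eq_self hv, collapse_eq_self (hB.mate_notMem_sdiff hμ hv)] at h
    exact h hne

/-- A perfect matching `ν` of the contraction lifts to `G`, entering the blossom at any `u ∈ B`
adjacent to `ν x`: factor-criticality matches the rest of the blossom. -/
lemma exists_isMateOn_of_contractBlossom {ν : V → V}
    (hν : IsMateOn (G.contractBlossom μ B x) univ ν) (hu : u ∈ B) (hadj : G.Adj u (ν x)) :
    ∃ σ, IsMateOn G univ σ ∧ σ u = ν x ∧ ∀ v ∉ B, v ≠ ν x → σ v = ν v := by
  classical
  set y := ν x
  have hy : y ∉ B := (hB.exists_adj_of_contractBlossom_adj_base hμ (hν.adj trivial)).1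
  obtain ⟨τ, hτ⟩ := hB.exists_isMateOn u hu
  have hrest : IsMateOn G (B ∪ {y})ᶜ ν := by
    intro v hv
    simp only [mem_compl_iff, mem_union, mem_singleton_iff, not_or] at hv ⊢
    have hνx : ν v ≠ x := fun h => hv.2 (by rw [← hν.apply_apply (mem_univ v), h])
    have hνB : ν v ∉ B := fun h => hv.1 <| by
      simpa [← eq_mate_of_contractBlossom_adj hμ ⟨h, hνx⟩ (hν.adj trivial).symm] using
        (hB.mapsTo_mate ⟨h, hνx⟩).1
    exact ⟨⟨hνB, fun h => hv.1 (hν.injective h ▸ hB.base_mem)⟩, hν.apply_apply trivial,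
      hB.adj_of_contractBlossom_adj hv.1 hνB (hν.adj trivial)⟩
  have hσ := hτ.piecewise ((isMateOn_pair hadj).piecewise hrest ?_) ?_
  · have hU : B \ {u} ∪ ({u, y} ∪ (B ∪ {y})ᶜ) = univ := by
      ext v; by_cases v = u <;> simp_all [or_iff_not_imp_left]
    rw [hU] at hσ
    refine ⟨_, hσ, by simp [Set.piecewise], fun v hv hvy => ?_⟩
    have : v ≠ u := fun h => hv (h ▸ hu)
    simp [Set.piecewise, hv, this, hvy]
  · rw [Set.disjoint_left]; rintro v (rfl | rfl) <;> simp [hu, hy]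
  · rw [Set.disjoint_left]; rintro v ⟨hvB, hvu⟩ h; simp_all

lemma reachable_of_contractBlossom (h : (G.contractBlossom μ B x).Reachable a b) :
    G.Reachable a b := by
  have hr : ∀ a b, ((∃ a₀ b₀, G.Adj a₀ b₀ ∧ collapse B x a₀ = a ∧ collapse B x b₀ = b) ∨
      (a ∈ B \ {x} ∧ b = μ a)) → G.Reachable a b := by
    rintro _ _ (⟨a₀, b₀, h₀, rfl, rfl⟩ | ⟨-, rfl⟩)
    · exact hB.reachable_collapse.trans (h₀.reachable.trans hB.reachable_collapse.symm)
    · exact (hμ.adj trivial).reachable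
  refine h.map_of_forall_adj id fun a b hab => ?_
  obtain ⟨-, h' | h'⟩ := (fromRel_adj _ _ _).1 hab
  exacts [hr a b h', (hr b a h').symm]

lemma notMem_sdiff_of_reachable_contractBlossom (h : (G.contractBlossom μ B x).Reachable x v) :
    v ∉ B \ {x} :=
  h.mem_of_forall_adj (S := (B \ {x})ᶜ)
    (fun _ _ hab ha hb => ha (eq_mate_of_contractBlossom_adj hμ hb hab.symm ▸ hB.mapsTo_mate hb))
    (fun h => h.2 rfl)

variable (huniq : ∀ σ, IsMateOn G univ σ → σ = μ)
include huniq

lemma eq_base_of_adj_mate (hu : u ∈ B) (h : G.Adj u (μ x)) : u = x := by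
  obtain ⟨σ, hσ, hσu, -⟩ :=
    hB.exists_isMateOn_of_contractBlossom hμ (hB.isMateOn_contractBlossom hμ) hu h
  exact hμ.injective (huniq σ hσ ▸ hσu)

lemma eq_of_isMateOn_contractBlossom {ν : V → V}
    (hν : IsMateOn (G.contractBlossom μ B x) univ ν) : ν = μ := by
  obtain ⟨hy, u, hu, hadj⟩ := hB.exists_adj_of_contractBlossom_adj_base hμ (hν.adj trivial)
  obtain ⟨σ, hσ, hσu, hσν⟩ := hB.exists_isMateOn_of_contractBlossom hμ hν hu hadj
  rw [huniq σ hσ] at hσu hσν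
  obtain rfl : u = x := by_contra fun h => hy (hσu ▸ (hB.mapsTo_mate ⟨hu, h⟩).1)
  funext v
  by_cases hv : v ∈ B \ {u}
  · exact eq_mate_of_contractBlossom_adj hμ hv (hν.adj trivial)
  by_cases hvu : v = u
  · rw [hvu, hσu]
  by_cases hvy : v = ν u
  · rw [hvy, hν.apply_apply trivial, ← hσu, hμ.apply_apply trivial]
  exact (hσν v (fun h => hv ⟨h, hvu⟩) hvy).symm

lemma notMem_sdiff_of_mate_collapse (hab : G.Adj a b) (hne : collapse B x a ≠ collapse B x b)
    (hμab : μ (collapse B x a) = collapse B x b) : a ∉ B \ {x} := fun ha => by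
  rw [collapse_of_mem ha.1] at hne hμab
  have hb : b ∉ B := fun hb => hne (collapse_of_mem hb).symm
  rw [collapse_of_notMem hb] at hμab
  exact ha.2 (hB.eq_base_of_adj_mate hμ huniq ha.1 (hμab ▸ hab))

lemma isBridge_of_contractBlossom (hv : v ∉ B \ {x})
    (h : (G.contractBlossom μ B x).IsBridge s(v, μ v)) : G.IsBridge s(v, μ v) := by
  rw [isBridge_iff] at h ⊢
  refine fun hr => h ?_
  have := hr.map_of_forall_adj (H := (G.contractBlossom μ B x).deleteEdges {s(v, μ v)})
    (collapse B x) fun a b hab => by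
      obtain ⟨hab, hne⟩ := (deleteEdges_adj ..).1 hab
      by_cases hc : collapse B x a = collapse B x b
      · rw [hc]
      refine Adj.reachable ((deleteEdges_adj ..).2
        ⟨contractBlossom_adj_collapse hab hc, fun he => hne ?_⟩)
      rw [mem_singleton_iff, Sym2.eq_iff] at he ⊢
      have hμab : μ (collapse B x a) = collapse B x b := by
        rcases he with ⟨h1, h2⟩ | ⟨h1, h2⟩
        · rw [h1, h2]
        · rw [h1, h2, hμ.apply_apply trivial]
      rwa [← collapse_eq_self (hB.notMem_sdiff_of_mate_collapse hμ huniq hab hc hμab),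
        ← collapse_eq_self (hB.notMem_sdiff_of_mate_collapse hμ huniq hab.symm (Ne.symm hc)
          (hμ.apply_eq_comm.1 hμab))]
  rwa [collapse_eq_self hv, collapse_eq_self (hB.mate_notMem_sdiff hμ hv)] at this

end IsBlossom

end Contraction

section AlternatingSequences

variable {s : ℕ → V} {i n : ℕ}

lemma exists_add_eq_injOn [Finite V] (s : ℕ → V) :
    ∃ i n, 0 < n ∧ s (i + n) = s i ∧ InjOn s (Iio (i + n)) := by
  classical
  have hex : ∃ j, ∃ i < j, s i = s j := by
    obtain ⟨a, b, hab, h⟩ := Finite.exists_ne_map_eq_of_infinite s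
    rcases hab.lt_or_gt with hab | hab
    exacts [⟨b, a, hab, h⟩, ⟨a, b, hab, h.symm⟩]
  obtain ⟨i, hi, h⟩ := Nat.find_spec hex
  refine ⟨i, Nat.find hex - i, by omega, by rw [Nat.add_sub_cancel' hi.le, h],
    fun a ha b hb hab => ?_⟩
  rw [Nat.add_sub_cancel' hi.le] at ha hb
  by_contra hne
  rcases Ne.lt_or_gt hne with h' | h'
  exacts [Nat.find_min hex hb ⟨a, h', hab⟩, Nat.find_min hex ha ⟨b, h', hab.symm⟩]

def cyclicSegment (s : ℕ → V) (i n : ℕ) (k : ZMod n) : V := s (i + k.val)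

variable [NeZero n]

lemma cyclicSegment_injective (hinj : InjOn s (Iio (i + n))) : Injective (cyclicSegment s i n) :=
  fun a b h => ZMod.val_injective n <| by
    have := hinj (show i + a.val < i + n by simp [ZMod.val_lt])
      (show i + b.val < i + n by simp [ZMod.val_lt]) h
    omega

lemma cyclicSegment_add_one (hrep : s (i + n) = s i) (k : ZMod n) :
    cyclicSegment s i n (k + 1) = s (i + k.val + 1) := by
  have hk := ZMod.val_lt k
  rw [cyclicSegment, ZMod.val_add_one]
  rcases Nat.lt_or_ge (k.val + 1) n with h | h
  · rw [Nat.mod_eq_of_lt h, add_assoc]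
  · have h' : k.val + 1 = n := by omega
    rw [h', Nat.mod_self, add_zero, add_assoc, h', hrep]

variable (hμ : IsMateOn G univ μ) (hs : ∀ k, μ (s k) = s (k + 1) ↔ Odd k)
include hμ hs

lemma apply_add_two_ne_of_alternating (k : ℕ) : s (k + 2) ≠ s k := by
  intro h
  rcases Nat.even_or_odd k with hk | hk
  · have h' := (hs (k + 1)).2 hk.add_one
    rw [h, hμ.apply_eq_comm] at h'
    exact Nat.not_odd_iff_even.2 hk ((hs k).1 h')
  · have h' := (hs k).2 hk
    rw [hμ.apply_eq_comm, ← h] at h'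
    exact Nat.not_odd_iff_even.2 hk.add_one ((hs (k + 1)).1 h')

lemma even_of_alternating_of_odd (hrep : s (i + n) = s i) (hinj : InjOn s (Iio (i + n)))
    (hi : Odd i) : Even n := by
  by_contra hn
  rw [Nat.not_even_iff_odd] at hn
  have := NeZero.pos n
  have h1 : μ (s (i + n - 1)) = s i := by
    rw [(hs _).2 (by rw [Nat.odd_iff] at hi hn ⊢; omega), Nat.sub_add_cancel (by omega), hrep]
  rw [hμ.apply_eq_comm, (hs i).2 hi] at h1
  rcases Nat.lt_or_ge 1 n with h | h
  · have := hinj (show i + 1 < i + n by omega) (show i + n - 1 < i + n by omega) h1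
    rw [Nat.odd_iff] at hn
    omega
  · rw [show i + n - 1 = i by omega] at h1
    exact (hμ.adj (mem_univ (s i))).ne (((hs i).2 hi).trans h1).symm

lemma cyclicSegment_mate_of_even (hrep : s (i + n) = s i) (hn : Even n) (k : ZMod n) :
    μ (cyclicSegment s i n k) = cyclicSegment s i n (k + 1) ∨
      μ (cyclicSegment s i n k) = cyclicSegment s i n (k - 1) := by
  rcases Nat.even_or_odd (i + k.val) with he | ho
  · refine Or.inr (hμ.apply_eq_comm.2 ?_)
    have hodd : Odd (i + (k - 1).val) := by
      rw [Nat.odd_iff]; rw [Nat.even_iff] at he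
      by_cases hk : k = 0
      · subst hk
        rw [zero_sub, ZMod.val_neg_one']
        rw [ZMod.val_zero] at he
        obtain ⟨r, hr⟩ := hn
        have := NeZero.pos n
        omega
      · have := (ZMod.val_ne_zero k).2 hk
        rw [ZMod.val_sub_one_of_ne_zero hk]
        omega
    have h := (hs _).2 hodd
    rwa [← cyclicSegment_add_one hrep, sub_add_cancel] at h
  · exact Or.inl (by rw [cyclicSegment_add_one hrep]; exact (hs _).2 ho)

end AlternatingSequences

section AlternatingWalk

def altWalk (μ g : V → V) (w : V) : ℕ → V
  | 0 => w
  | k + 1 => if Even k then g (altWalk μ g w k) else μ (altWalk μ g w k)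

variable (hμ : IsMateOn G univ μ) (hg : ∀ v, G.Reachable w v → G.Adj v (g v) ∧ g v ≠ μ v)
include hμ hg

lemma reachable_and_adj_altWalk (k : ℕ) : G.Reachable w (altWalk μ g w k) ∧
    G.Adj (altWalk μ g w k) (altWalk μ g w (k + 1)) := by
  have step : ∀ k, G.Reachable w (altWalk μ g w k) →
      G.Adj (altWalk μ g w k) (altWalk μ g w (k + 1)) := by
    intro k hk
    rcases Nat.even_or_odd k with he | ho
    · simp only [altWalk, if_pos he]
      exact (hg _ hk).1
    · simp only [altWalk, if_neg (Nat.not_even_iff_odd.2 ho)]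
      exact hμ.adj trivial
  have hreach : G.Reachable w (altWalk μ g w k) := by
    induction k with
    | zero => rfl
    | succ k ih => exact ih.trans (step k ih).reachable
  exact ⟨hreach, step k hreach⟩

lemma mate_altWalk_eq_iff (k : ℕ) : μ (altWalk μ g w k) = altWalk μ g w (k + 1) ↔ Odd k := by
  rcases Nat.even_or_odd k with hk | hk
  · simp only [altWalk, if_pos hk, Nat.not_odd_iff_even.2 hk, iff_false]
    exact fun h => (hg _ (reachable_and_adj_altWalk hμ hg k).1).2 h.symm
  · simp [altWalk, Nat.not_even_iff_odd.2 hk, hk]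

lemma exists_isMateOn_ne_or_isBlossom [Finite V] :
    (∃ σ, IsMateOn G univ σ ∧ σ ≠ μ) ∨
      ∃ B x, G.IsBlossom μ B x ∧ G.Reachable w x ∧ (B \ {x}).Nonempty := by
  have hs := mate_altWalk_eq_iff hμ hg
  have hwalk := reachable_and_adj_altWalk hμ hg
  generalize altWalk μ g w = s at hs hwalk
  obtain ⟨i, n, hn0, hrep, hinj⟩ := exists_add_eq_injOn s
  have : NeZero n := ⟨hn0.ne'⟩
  have hc_inj := cyclicSegment_injective hinj
  have hc_adj : ∀ k, G.Adj (cyclicSegment s i n k) (cyclicSegment s i n (k + 1)) := fun k => by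
    rw [cyclicSegment_add_one hrep]; exact (hwalk _).2
  have hn1 : n ≠ 1 := fun h => (hwalk i).2.ne (by rw [← hrep, h])
  have hn2 : n ≠ 2 := fun h => apply_add_two_ne_of_alternating hμ hs i (by rw [← h, hrep])
  by_cases hn : Even n
  · exact Or.inl (exists_isMateOn_ne_of_cycle (by omega) hc_inj hc_adj hμ
      (cyclicSegment_mate_of_even hμ hs hrep hn))
  have hi : Even i := by
    by_contra hi
    exact hn (even_of_alternating_of_odd hμ hs hrep hinj (Nat.not_even_iff_odd.1 hi))
  refine Or.inr ⟨_, _, isBlossom_range_of_odd (Nat.not_even_iff_odd.1 hn) hc_inj hc_adj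
    hμ fun k hk => ?_, (hwalk _).1, _, ⟨1, rfl⟩, fun h => ?_⟩
  · rw [cyclicSegment_add_one hrep]; exact (hs _).2 (hi.add_odd hk)
  · have h0 := congrArg ZMod.val (hc_inj h)
    rw [ZMod.val_one_eq_one_mod, ZMod.val_zero, Nat.mod_eq_of_lt (by omega)] at h0
    exact one_ne_zero h0

end AlternatingWalk

theorem exists_reachable_isBridge_mate [Finite V] (hμ : IsMateOn G univ μ)
    (huniq : ∀ σ, IsMateOn G univ σ → σ = μ) (w : V) :
    ∃ v, G.Reachable w v ∧ G.IsBridge s(v, μ v) := by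
  induction hN : {v | G.Reachable w v}.ncard using Nat.strong_induction_on generalizing G w with
  | _ N ih =>
  by_contra! hno
  choose! g hg using fun v hv => exists_adj_ne_of_not_isBridge (hμ.adj trivial) (hno v hv)
  rcases exists_isMateOn_ne_or_isBlossom hμ hg with ⟨σ, hσ, hne⟩ | ⟨B, x, hB, hwx, b, hb⟩
  · exact hne (huniq σ hσ)
  have hlt : {v | (G.contractBlossom μ B x).Reachable x v}.ncard < N := by
    rw [← hN]
    refine Set.ncard_lt_ncard ⟨fun v hv => hwx.trans (hB.reachable_of_contractBlossom hμ hv),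
      fun h => ?_⟩
    exact hB.notMem_sdiff_of_reachable_contractBlossom hμ
      (h (hwx.trans (hB.reachable b hb.1))) hb
  obtain ⟨v, hxv, hbr⟩ := ih _ hlt (hB.isMateOn_contractBlossom hμ)
    (fun ν hν => hB.eq_of_isMateOn_contractBlossom hμ huniq hν) x rfl
  exact hno v (hwx.trans (hB.reachable_of_contractBlossom hμ hxv))
    (hB.isBridge_of_contractBlossom hμ huniq
      (hB.notMem_sdiff_of_reachable_contractBlossom hμ hxv) hbr)

lemma Subgraph.IsPerfectMatching.exists_isMateOn {M : G.Subgraph} (hM : M.IsPerfectMatching) :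
    ∃ μ, IsMateOn G univ μ ∧ ∀ v, M.Adj v (μ v) := by
  choose μ hμ hμ' using Subgraph.isPerfectMatching_iff.1 hM
  exact ⟨μ, fun v _ => ⟨trivial, (hμ' _ _ (hμ v).symm).symm, M.adj_sub (hμ v)⟩, hμ⟩

def IsMateOn.toSubgraph (hσ : IsMateOn G univ σ) : G.Subgraph where
  verts := univ
  Adj a b := σ a = b
  adj_sub := by rintro a _ rfl; exact hσ.adj trivial
  edge_vert _ := trivial
  symm := ⟨fun _ _ h => h ▸ hσ.apply_apply trivial⟩

lemma IsMateOn.isPerfectMatching_toSubgraph (hσ : IsMateOn G univ σ) :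
    hσ.toSubgraph.IsPerfectMatching :=
  Subgraph.isPerfectMatching_iff.2 fun v => ⟨σ v, rfl, fun _ h => Eq.symm h⟩

end SimpleGraph

open SimpleGraph

/-- Kotzig's theorem: a connected graph with a unique perfect matching `M` has a cut
edge belonging to `M`. -/
theorem kotzig_unique_perfect_matching_bridge {V : Type*} [Fintype V]
    (G : SimpleGraph V) (hconn : G.Connected) (M : G.Subgraph)
    (hM : M.IsPerfectMatching) (huniq : ∀ M' : G.Subgraph, M'.IsPerfectMatching → M' = M) :
    ∃ e ∈ M.edgeSet, G.IsBridge e := by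
  obtain ⟨μ, hμ, hMμ⟩ := hM.exists_isMateOn
  have hμuniq : ∀ σ, IsMateOn G univ σ → σ = μ := fun σ hσ => funext fun v => by
    have hv : hσ.toSubgraph.Adj v (σ v) := rfl
    rw [huniq _ hσ.isPerfectMatching_toSubgraph] at hv
    exact hM.1.eq_of_adj_left hv (hMμ v)
  obtain ⟨w⟩ := hconn.nonempty
  obtain ⟨v, -, hv⟩ := exists_reachable_isBridge_mate hμ hμuniq w
  exact ⟨s(v, μ v), hMμ v, hv⟩
end
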